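/- A digraph whose cycle space has Z-rank at least 3 is required for having cycles but no isolated cycles: if G' has at least one directed cycle and no isolated cycle, then G' contains at least three Z-linearly independent elementary cycles, hence |E'| - |V'| + 1 ≥ 3. -/

import Mathlib

/-!
No arc of the elementary cycle `c₁` is isolating, so some elementary cycle `c₂` avoids the arc
`e₁ = c₁ 0` but shares an arc `f` with `c₁`; since an elementary cycle contains no other cycle,
`c₂` also has an arc `e₂` outside `c₁`. As `f` is not isolating for `c₂`, some elementary cycle
`c₃` avoids `f`. A vanishing combination of the three 0/1 vectors, evaluated at `e₁`, `e₂`, `f` and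
an arc of `c₃`, is trivial.

Cycle vectors lie in the kernel of the incidence matrix. Its rank is at least `|V| - 1`, because on
a connected digraph the kernel of the transpose consists of constant potentials, and rank–nullity
gives the bound.
-/

/-- A directed cycle of a digraph given by `tail`/`head` maps. -/
def IsCycle {V E : Type*} (tail head : E → V) {n : ℕ} (c : Fin (n + 1) → E) : Prop :=
  ∀ i, head (c i) = tail (c (i + 1))

/-- An elementary cycle: a directed cycle visiting each vertex it contains exactly once. -/
def IsElemCycle {V E : Type*} (tail head : E → V) {n : ℕ} (c : Fin (n + 1) → E) : Prop :=
  IsCycle tail head c ∧ Function.Injective (fun i => tail (c i))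

/-- `e` is an isolating arc of the elementary cycle `c`. -/
def IsolatingArc {V E : Type*} (tail head : E → V) {n : ℕ} (c : Fin (n + 1) → E)
    (e : E) : Prop :=
  e ∈ Set.range c ∧
    ∀ (m : ℕ) (c' : Fin (m + 1) → E), IsElemCycle tail head c' →
      (∀ i, ¬ (tail (c' i) = tail e ∧ head (c' i) = head e)) →
      Disjoint (Set.range c) (Set.range c')

/-- The 0/1 vector in `ℤ^E` of a cycle. -/
def cycVec {E : Type*} [Fintype E] [DecidableEq E] {n : ℕ} (c : Fin (n + 1) → E) : E → ℤ :=
  fun e => ((Finset.univ.filter fun i => c i = e).card : ℤ)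

/-- The underlying adjacency relation of the digraph. -/
def AdjRel {V E : Type*} (tail head : E → V) (u v : V) : Prop :=
  ∃ e, (tail e = u ∧ head e = v) ∨ (tail e = v ∧ head e = u)

open Module

theorem intCast_cycVec_of_injective {E R : Type*} [Fintype E] [DecidableEq E] [AddGroupWithOne R]
    {n : ℕ} {c : Fin (n + 1) → E} (hc : Function.Injective c) :
    (fun e => (cycVec c e : R)) = (Set.range c).indicator 1 := by
  funext e
  by_cases he : e ∈ Set.range c
  · obtain ⟨i, rfl⟩ := he
    have hfib : Finset.univ.filter (fun j => c j = c i) = {i} := by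
      ext j; simp [hc.eq_iff]
    simp [cycVec, hfib]
  · have hfib : Finset.univ.filter (fun j => c j = e) = ∅ := by
      ext j; simpa using fun h => he ⟨j, h⟩
    simp [cycVec, he, hfib]

theorem linearIndependent_indicator_three {ι K : Type*} [Field K] [LinearOrder K]
    [IsStrictOrderedRing K] {S₁ S₂ S₃ : Set ι} {e₁ e₂ f : ι}
    (he₁ : e₁ ∈ S₁ \ S₂) (he₂ : e₂ ∈ S₂ \ S₁) (hf : f ∈ S₁ ∩ S₂) (hf₃ : f ∉ S₃)
    (hS₃ : S₃.Nonempty) :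
    LinearIndependent K ![S₁.indicator (1 : ι → K), S₂.indicator 1, S₃.indicator 1] := by
  rw [Fintype.linearIndependent_iff]
  intro g hg
  have hcoord : ∀ x,
      g 0 * S₁.indicator 1 x + g 1 * S₂.indicator 1 x + g 2 * S₃.indicator 1 x = 0 :=
    fun x => by simpa [Fin.sum_univ_three] using congrFun hg x
  obtain ⟨x₀, hx₀⟩ := hS₃
  have h₀ := hcoord x₀
  have h₁ := hcoord e₁
  have h₂ := hcoord e₂
  have hf' := hcoord f
  simp only [Set.indicator, Pi.one_apply, he₁.1, he₁.2, he₂.1, he₂.2, hf.1, hf.2, hf₃, hx₀,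
    if_true, if_false, mul_one, mul_zero, add_zero, zero_add] at h₀ h₁ h₂ hf'
  -- whatever the memberships left open, these four evaluations force `g = 0`
  intro i
  fin_cases i <;> split_ifs at h₀ h₁ h₂ <;> simp <;> linarith

open Fin.NatCast in
theorem Fin.eq_univ_of_add_one_mem {n : ℕ} {S : Set (Fin (n + 1))} (hS : ∀ j ∈ S, j + 1 ∈ S)
    {j₀ : Fin (n + 1)} (hj₀ : j₀ ∈ S) : S = Set.univ := by
  have hiter : ∀ k : ℕ, j₀ + k ∈ S := by
    intro k
    induction k with
    | zero => simpa using hj₀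
    | succ k ih => simpa [add_assoc] using hS _ ih
  refine Set.eq_univ_of_forall fun j => ?_
  simpa using hiter (j - j₀).val

section Cycles

variable {V E : Type*} {tail head : E → V} {n : ℕ} {c : Fin (n + 1) → E}

theorem IsElemCycle.injective (hc : IsElemCycle tail head c) : Function.Injective c :=
  fun _ _ h => hc.2 (congrArg tail h)

/-- Following `c` from an arc of `c'` never leaves `c'`: in both cycles the next arc is the one
whose tail is the current head. -/
theorem IsElemCycle.range_subset_of_range_subset (hc : IsElemCycle tail head c) {m : ℕ}
    {c' : Fin (m + 1) → E} (hc' : IsCycle tail head c') (hsub : Set.range c' ⊆ Set.range c) :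
    Set.range c ⊆ Set.range c' := by
  have hclosed : ∀ j ∈ {j | c j ∈ Set.range c'}, j + 1 ∈ {j | c j ∈ Set.range c'} := by
    rintro j ⟨i, hi⟩
    obtain ⟨k, hk⟩ := hsub ⟨i + 1, rfl⟩
    have hnext : k = j + 1 := hc.2 <| by
      change tail (c k) = tail (c (j + 1))
      rw [hk, ← hc' i, hi, hc.1 j]
    exact ⟨i + 1, by rw [← hk, hnext]⟩
  obtain ⟨j₀, hj₀⟩ := hsub ⟨0, rfl⟩
  have hall := Fin.eq_univ_of_add_one_mem hclosed (j₀ := j₀) ⟨0, hj₀.symm⟩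
  rintro _ ⟨j, rfl⟩
  exact Set.eq_univ_iff_forall.mp hall j

theorem exists_elemCycle_of_not_isolatingArc {e : E}
    (he : e ∈ Set.range c) (hnot : ¬ IsolatingArc tail head c e) :
    ∃ (m : ℕ) (c' : Fin (m + 1) → E), IsElemCycle tail head c' ∧ e ∉ Set.range c' ∧
      (Set.range c ∩ Set.range c').Nonempty := by
  simp only [IsolatingArc, he, true_and, not_forall] at hnot
  obtain ⟨m, c', hc', hpar, hmeet⟩ := hnot
  refine ⟨m, c', hc', ?_, Set.not_disjoint_iff_nonempty_inter.mp hmeet⟩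
  rintro ⟨i, rfl⟩
  exact hpar i ⟨rfl, rfl⟩

end Cycles

theorem Matrix.rank_add_finrank_ker_mulVecLin {m n K : Type*} [Fintype n] [Field K]
    (A : Matrix m n K) : A.rank + finrank K (LinearMap.ker A.mulVecLin) = Fintype.card n := by
  rw [Matrix.rank, LinearMap.finrank_range_add_finrank_ker, finrank_fintype_fun_eq_card]

section Incidence

open Matrix

variable {V E : Type*} [DecidableEq V] (K : Type*) [Field K]
  (tail head : E → V)

def incMatrix : Matrix V E K :=
  fun v e => (if head e = v then 1 else 0) - (if tail e = v then 1 else 0)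

variable {K tail head}

theorem incMatrix_mulVec_cycVec [Fintype E] [DecidableEq E] {n : ℕ} {c : Fin (n + 1) → E}
    (hc : IsCycle tail head c) : incMatrix K tail head *ᵥ (fun e => (cycVec c e : K)) = 0 := by
  funext v
  have hcast : ∀ e, (cycVec c e : K) = ∑ i, if c i = e then 1 else 0 := fun e => by
    rw [cycVec, Int.cast_natCast, Finset.natCast_card_filter]
  have hshift :
      ∑ i, (if head (c i) = v then (1 : K) else 0) = ∑ i, if tail (c i) = v then 1 else 0 :=
    Fintype.sum_equiv (Equiv.addRight 1) _ _ fun i => by rw [Equiv.coe_addRight, hc i]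
  simp only [Matrix.mulVec, dotProduct, hcast, Finset.mul_sum, mul_ite, mul_one, mul_zero]
  rw [Finset.sum_comm]
  simp [incMatrix, Finset.sum_sub_distrib, hshift]

theorem incMatrix_transpose_mulVec_apply [Fintype V] (p : V → K) (e : E) :
    ((incMatrix K tail head)ᵀ *ᵥ p) e = p (head e) - p (tail e) := by
  simp [incMatrix, Matrix.mulVec, dotProduct, sub_mul, Finset.sum_sub_distrib]

theorem ker_incMatrix_transpose_le_span_one [Fintype V]
    (hconn : ∀ u v : V, Relation.ReflTransGen (AdjRel tail head) u v) :
    LinearMap.ker (incMatrix K tail head)ᵀ.mulVecLin ≤ K ∙ 1 := by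
  intro p hp
  have hflat : ∀ e, p (head e) = p (tail e) := fun e => by
    have := congrFun (LinearMap.mem_ker.mp hp) e
    rwa [Matrix.mulVecLin_apply, incMatrix_transpose_mulVec_apply, Pi.zero_apply,
      sub_eq_zero] at this
  rcases isEmpty_or_nonempty V with hV | ⟨⟨v₀⟩⟩
  · simp [Subsingleton.elim p 0]
  have hconst : ∀ v, p v = p v₀ := fun v => by
    induction hconn v₀ v with
    | refl => rfl
    | tail _ hadj ih =>
      obtain ⟨e, ⟨rfl, rfl⟩ | ⟨rfl, rfl⟩⟩ := hadj
      · rw [hflat, ih]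
      · rw [← hflat, ih]
  exact Submodule.mem_span_singleton.mpr ⟨p v₀, funext fun v => by simp [hconst v]⟩

theorem card_le_rank_incMatrix_add_one [Fintype V] [Fintype E]
    (hconn : ∀ u v : V, Relation.ReflTransGen (AdjRel tail head) u v) :
    Fintype.card V ≤ (incMatrix K tail head).rank + 1 := by
  have hnullity := (incMatrix K tail head)ᵀ.rank_add_finrank_ker_mulVecLin
  have hker : finrank K (LinearMap.ker (incMatrix K tail head)ᵀ.mulVecLin) ≤ 1 :=
    (Submodule.finrank_mono (ker_incMatrix_transpose_le_span_one hconn)).trans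
      ((finrank_span_le_card {1}).trans (by simp))
  rw [Matrix.rank_transpose] at hnullity
  omega

theorem card_add_card_le_of_linearIndependent [Fintype V] [Fintype E]
    (hconn : ∀ u v : V, Relation.ReflTransGen (AdjRel tail head) u v)
    {ι : Type*} [Fintype ι] {x : ι → E → K} (hx : LinearIndependent K x)
    (hker : ∀ i, incMatrix K tail head *ᵥ x i = 0) :
    Fintype.card V + Fintype.card ι ≤ Fintype.card E + 1 := by
  have hspan : Submodule.span K (Set.range x) ≤ LinearMap.ker (incMatrix K tail head).mulVecLin :=
    Submodule.span_le.mpr <| Set.range_subset_iff.mpr hker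
  have hι := (finrank_span_eq_card hx).symm.trans_le (Submodule.finrank_mono hspan)
  have hnullity := (incMatrix K tail head).rank_add_finrank_ker_mulVecLin
  have hrank := card_le_rank_incMatrix_add_one (K := K) hconn
  omega

end Incidence

theorem LinearIndependent.of_intCast {ι E : Type*} {w : ι → E → ℤ}
    (h : LinearIndependent ℚ fun i e => (w i e : ℚ)) : LinearIndependent ℤ w :=
  .of_comp ((Int.castAddHom ℚ).toIntLinearMap.compLeft E) (h.restrict_scalars' ℤ)

theorem three_indep_cycles_of_no_isolated_general {V E : Type*} [Fintype V] [Fintype E]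
    [DecidableEq E] (tail head : E → V)
    (hconn : ∀ u v : V, Relation.ReflTransGen (AdjRel tail head) u v)
    (hcyc : ∃ (n : ℕ) (c : Fin (n + 1) → E), IsElemCycle tail head c)
    (hiso : ¬ ∃ (n : ℕ) (c : Fin (n + 1) → E),
      IsElemCycle tail head c ∧ ∃ e, IsolatingArc tail head c e) :
    (∃ (c₁ c₂ c₃ : Σ m : ℕ, Fin (m + 1) → E),
      IsElemCycle tail head c₁.2 ∧ IsElemCycle tail head c₂.2 ∧
      IsElemCycle tail head c₃.2 ∧
      LinearIndependent ℤ ![cycVec c₁.2, cycVec c₂.2, cycVec c₃.2]) ∧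
    Fintype.card V + 3 ≤ Fintype.card E + 1 := by
  classical
  have hnot {n : ℕ} {c : Fin (n + 1) → E} (hc : IsElemCycle tail head c) (e : E) :
      ¬ IsolatingArc tail head c e := fun h => hiso ⟨n, c, hc, e, h⟩
  obtain ⟨n₁, c₁, hc₁⟩ := hcyc
  obtain ⟨n₂, c₂, hc₂, he₁, f, hf⟩ :=
    exists_elemCycle_of_not_isolatingArc ⟨0, rfl⟩ (hnot hc₁ (c₁ 0))
  obtain ⟨e₂, he₂⟩ : (Set.range c₂ \ Set.range c₁).Nonempty := Set.sdiff_nonempty.mpr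
    fun hsub => he₁ (hc₁.range_subset_of_range_subset hc₂.1 hsub ⟨0, rfl⟩)
  obtain ⟨n₃, c₃, hc₃, hf₃, -⟩ := exists_elemCycle_of_not_isolatingArc hf.2 (hnot hc₂ f)
  have hindep : LinearIndependent ℚ fun i e => (![cycVec c₁, cycVec c₂, cycVec c₃] i e : ℚ) := by
    have hfamily : (fun i e => (![cycVec c₁, cycVec c₂, cycVec c₃] i e : ℚ)) =
        ![(Set.range c₁).indicator 1, (Set.range c₂).indicator 1, (Set.range c₃).indicator 1] := by
      ext i : 1
      fin_cases i <;>
        simp [intCast_cycVec_of_injective, hc₁.injective, hc₂.injective, hc₃.injective]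
    rw [hfamily]
    exact linearIndependent_indicator_three (show c₁ 0 ∈ Set.range c₁ \ Set.range c₂ from
      ⟨⟨0, rfl⟩, he₁⟩) he₂ hf hf₃ (Set.range_nonempty c₃)
  have hker : ∀ i, (incMatrix ℚ tail head).mulVec
      (fun e => (![cycVec c₁, cycVec c₂, cycVec c₃] i e : ℚ)) = 0 := by
    intro i
    fin_cases i
    exacts [incMatrix_mulVec_cycVec hc₁.1, incMatrix_mulVec_cycVec hc₂.1,
      incMatrix_mulVec_cycVec hc₃.1]
  refine ⟨⟨⟨n₁, c₁⟩, ⟨n₂, c₂⟩, ⟨n₃, c₃⟩, hc₁, hc₂, hc₃, hindep.of_intCast⟩, ?_⟩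
  simpa using card_add_card_le_of_linearIndependent hconn hindep hker

/-- A finite connected digraph with at least one directed cycle and no isolated cycle
contains three ℤ-linearly independent elementary cycles; hence `|E| - |V| + 1 ≥ 3`. -/
theorem three_indep_cycles_of_no_isolated {V E : Type*} [Fintype V] [Fintype E]
    [DecidableEq E] [Nonempty V] (tail head : E → V)
    (hconn : ∀ u v : V, Relation.ReflTransGen (AdjRel tail head) u v)
    (hcyc : ∃ (n : ℕ) (c : Fin (n + 1) → E), IsElemCycle tail head c)
    (hiso : ¬ ∃ (n : ℕ) (c : Fin (n + 1) → E),
      IsElemCycle tail head c ∧ ∃ e, IsolatingArc tail head c e) :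
    (∃ (c₁ c₂ c₃ : Σ m : ℕ, Fin (m + 1) → E),
      IsElemCycle tail head c₁.2 ∧ IsElemCycle tail head c₂.2 ∧
      IsElemCycle tail head c₃.2 ∧
      LinearIndependent ℤ ![cycVec c₁.2, cycVec c₂.2, cycVec c₃.2]) ∧
    Fintype.card V + 3 ≤ Fintype.card E + 1 :=
  three_indep_cycles_of_no_isolated_general tail head hconn hcyc hiso
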